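/- Let T > 0 and let v, v', u : ℝ × [0,T] → ℂ be measurable. Suppose p : ℝ → [0,∞) is measurable and |u(x,t)| ≤ p(x−t) for all (x,t) ∈ ℝ × [0,T]. Then ‖v v' u‖_{N₊(T)} ≤ ‖v‖_{X₋(T)} ‖v'‖_{X₋(T)} ‖p‖_{D(T)}, where v v' u denotes the pointwise product. Symmetrically, if u, u', v are measurable and q : ℝ → [0,∞) satisfies |v(x,t)| ≤ q(x+t) for all (x,t), then ‖u u' v‖_{N₋(T)} ≤ ‖u‖_{X₊(T)} ‖u'‖_{X₊(T)} ‖q‖_{D(T)}. -/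

import Mathlib

open MeasureTheory Set

/-- The `D(T)` norm: `‖f‖_{D(T)} = sup_{x ∈ ℝ} (∫₀^T |f(x+2s)|² ds)^{1/2}`,
for a nonnegative (extended-real-valued) density `g`. -/
noncomputable def DnormE (T : ℝ) (g : ℝ → ENNReal) : ENNReal :=
  ⨆ x : ℝ, (∫⁻ s in Set.Ioc (0:ℝ) T, (g (x + 2*s))^2) ^ (1/2 : ℝ)

/-- The `D(T)` norm of a complex-valued function. -/
noncomputable def Dnorm (T : ℝ) (f : ℝ → ℂ) : ENNReal :=
  DnormE T (fun y => (‖f y‖₊ : ENNReal))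

/-- `‖u‖_{X₊(T)} = sup_{x ∈ ℝ} (∫₀^T |u(x−t,t)|² dt)^{1/2}`. -/
noncomputable def Xplus (T : ℝ) (u : ℝ → ℝ → ℂ) : ENNReal :=
  ⨆ x : ℝ, (∫⁻ t in Set.Ioc (0:ℝ) T, (‖u (x - t) t‖₊ : ENNReal)^2) ^ (1/2 : ℝ)

/-- `‖v‖_{X₋(T)} = sup_{x ∈ ℝ} (∫₀^T |v(x+t,t)|² dt)^{1/2}`. -/
noncomputable def Xminus (T : ℝ) (v : ℝ → ℝ → ℂ) : ENNReal :=
  ⨆ x : ℝ, (∫⁻ t in Set.Ioc (0:ℝ) T, (‖v (x + t) t‖₊ : ENNReal)^2) ^ (1/2 : ℝ)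

/-- `‖F‖_{N₊(T)}`: the `D(T)` norm of `y ↦ ∫₀^T |F(y+s,s)| ds`. -/
noncomputable def Nplus (T : ℝ) (F : ℝ → ℝ → ℂ) : ENNReal :=
  DnormE T (fun y => ∫⁻ s in Set.Ioc (0:ℝ) T, (‖F (y + s) s‖₊ : ENNReal))

/-- `‖F‖_{N₋(T)}`: the `D(T)` norm of `y ↦ ∫₀^T |F(y−s,s)| ds`. -/
noncomputable def Nminus (T : ℝ) (F : ℝ → ℝ → ℂ) : ENNReal :=
  DnormE T (fun y => ∫⁻ s in Set.Ioc (0:ℝ) T, (‖F (y - s) s‖₊ : ENNReal))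

/-! Along the characteristic through `y`, the bound `|u(y + s, s)| ≤ p(y)` does not depend on `s`,
so `∫₀^T |v v' u|(y + s, s) ds ≤ p(y) ∫₀^T |v(y + s, s)| |v'(y + s, s)| ds`, and Cauchy–Schwarz
bounds the last integral by `‖v‖_{X₋(T)} ‖v'‖_{X₋(T)}` uniformly in `y`. Taking the `D(T)` norm
in `y` gives the first estimate; the second is its mirror image along the characteristics
`y - s`. -/

open scoped ENNReal

theorem lintegral_mul_le_L2_mul_L2 {α : Type*} [MeasurableSpace α] (μ : Measure α)
    {f g : α → ℝ≥0∞} (hf : AEMeasurable f μ) (hg : AEMeasurable g μ) :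
    ∫⁻ a, f a * g a ∂μ ≤ (∫⁻ a, f a ^ 2 ∂μ) ^ (1/2 : ℝ) * (∫⁻ a, g a ^ 2 ∂μ) ^ (1/2 : ℝ) := by
  simpa only [Pi.mul_apply, ENNReal.rpow_two] using
    ENNReal.lintegral_mul_le_Lp_mul_Lq μ Real.HolderConjugate.two_two hf hg

noncomputable def supL2 (T : ℝ) (f : ℝ → ℝ → ℝ≥0∞) : ℝ≥0∞ :=
  ⨆ y : ℝ, (∫⁻ s in Ioc 0 T, f y s ^ 2) ^ (1/2 : ℝ)

theorem Xminus_eq_supL2 (T : ℝ) (v : ℝ → ℝ → ℂ) :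
    Xminus T v = supL2 T fun y s => ‖v (y + s) s‖₊ := rfl

theorem Xplus_eq_supL2 (T : ℝ) (u : ℝ → ℝ → ℂ) :
    Xplus T u = supL2 T fun y s => ‖u (y - s) s‖₊ := rfl

theorem lintegral_mul_le_supL2_mul_supL2 {T : ℝ} {f g : ℝ → ℝ → ℝ≥0∞}
    (hf : ∀ y, Measurable (f y)) (hg : ∀ y, Measurable (g y)) (y : ℝ) :
    ∫⁻ s in Ioc 0 T, f y s * g y s ≤ supL2 T f * supL2 T g :=
  (lintegral_mul_le_L2_mul_L2 _ (hf y).aemeasurable (hg y).aemeasurable).trans <|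
    mul_le_mul' (le_iSup (fun y => (∫⁻ s in Ioc 0 T, f y s ^ 2) ^ (1/2 : ℝ)) y)
      (le_iSup (fun y => (∫⁻ s in Ioc 0 T, g y s ^ 2) ^ (1/2 : ℝ)) y)

theorem DnormE_mono {T : ℝ} {g h : ℝ → ℝ≥0∞} (hgh : g ≤ h) : DnormE T g ≤ DnormE T h := by
  unfold DnormE
  gcongr with x s
  exact hgh _

theorem DnormE_const_mul (T : ℝ) (C : ℝ≥0∞) {h : ℝ → ℝ≥0∞} (hh : Measurable h) :
    DnormE T (fun y => C * h y) = C * DnormE T h := by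
  have hC : (C ^ 2) ^ (1/2 : ℝ) = C := by
    rw [← ENNReal.rpow_two, ← ENNReal.rpow_mul]; norm_num
  have hmeas (x : ℝ) : Measurable fun s : ℝ => h (x + 2 * s) ^ 2 := by fun_prop
  simp only [DnormE, mul_pow, lintegral_const_mul _ (hmeas _),
    ENNReal.mul_rpow_of_nonneg _ _ (by norm_num : (0:ℝ) ≤ 1/2), hC, ENNReal.mul_iSup]

theorem DnormE_lintegral_mul_mul_le {T : ℝ} {f g c : ℝ → ℝ → ℝ≥0∞} {p : ℝ → ℝ≥0∞}
    (hf : ∀ y, Measurable (f y)) (hg : ∀ y, Measurable (g y)) (hp : Measurable p)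
    (hc : ∀ y, ∀ s ∈ Ioc 0 T, c y s ≤ p y) :
    DnormE T (fun y => ∫⁻ s in Ioc 0 T, f y s * g y s * c y s)
      ≤ supL2 T f * supL2 T g * DnormE T p := by
  calc _ ≤ DnormE T (fun y => supL2 T f * supL2 T g * p y) := DnormE_mono fun y => ?_
    _ = _ := DnormE_const_mul _ _ hp
  calc ∫⁻ s in Ioc 0 T, f y s * g y s * c y s
      ≤ ∫⁻ s in Ioc 0 T, f y s * g y s * p y :=
        setLIntegral_mono' measurableSet_Ioc fun s hs => by gcongr; exact hc y s hs
    _ = (∫⁻ s in Ioc 0 T, f y s * g y s) * p y := lintegral_mul_const _ ((hf y).mul (hg y))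
    _ ≤ _ := by gcongr; exact lintegral_mul_le_supL2_mul_supL2 hf hg y

theorem measurable_enorm_along {w : ℝ → ℝ → ℂ} (hw : Measurable (Function.uncurry w))
    {L : ℝ → ℝ → ℝ} (hL : Measurable (Function.uncurry L)) (y : ℝ) :
    Measurable fun s => (‖w (L y s) s‖₊ : ℝ≥0∞) :=
  (hw.comp ((hL.comp (measurable_const.prodMk measurable_id)).prodMk measurable_id)).enorm

theorem trilinear_estimates_general (T : ℝ) (u u' v v' : ℝ → ℝ → ℂ)
    (hu : Measurable (Function.uncurry u)) (hu' : Measurable (Function.uncurry u'))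
    (hv : Measurable (Function.uncurry v)) (hv' : Measurable (Function.uncurry v'))
    (p q : ℝ → ENNReal) (hp : Measurable p) (hq : Measurable q)
    (hup : ∀ x : ℝ, ∀ t ∈ Set.Icc (0:ℝ) T, (‖u x t‖₊ : ENNReal) ≤ p (x - t))
    (hvq : ∀ x : ℝ, ∀ t ∈ Set.Icc (0:ℝ) T, (‖v x t‖₊ : ENNReal) ≤ q (x + t)) :
    Nplus T (fun x t => v x t * v' x t * u x t)
        ≤ Xminus T v * Xminus T v' * DnormE T p ∧
    Nminus T (fun x t => u x t * u' x t * v x t)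
        ≤ Xplus T u * Xplus T u' * DnormE T q := by
  have hplus : Measurable (Function.uncurry fun y s : ℝ => y + s) := by fun_prop
  have hminus : Measurable (Function.uncurry fun y s : ℝ => y - s) := by fun_prop
  constructor
  · rw [Xminus_eq_supL2, Xminus_eq_supL2]
    simpa only [Nplus, nnnorm_mul, ENNReal.coe_mul] using
      DnormE_lintegral_mul_mul_le (measurable_enorm_along hv hplus)
        (measurable_enorm_along hv' hplus) hp
        fun y s hs => by simpa using hup (y + s) s (Ioc_subset_Icc_self hs)
  · rw [Xplus_eq_supL2, Xplus_eq_supL2]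
    simpa only [Nminus, nnnorm_mul, ENNReal.coe_mul] using
      DnormE_lintegral_mul_mul_le (measurable_enorm_along hu hminus)
        (measurable_enorm_along hu' hminus) hq
        fun y s hs => by simpa using hvq (y - s) s (Ioc_subset_Icc_self hs)

/-- Trilinear (null form) estimates: if `|u(x,t)| ≤ p(x−t)` then
`‖v v' u‖_{N₊(T)} ≤ ‖v‖_{X₋(T)} ‖v'‖_{X₋(T)} ‖p‖_{D(T)}`, and symmetrically, if
`|v(x,t)| ≤ q(x+t)` then `‖u u' v‖_{N₋(T)} ≤ ‖u‖_{X₊(T)} ‖u'‖_{X₊(T)} ‖q‖_{D(T)}`. -/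
theorem trilinear_estimates (T : ℝ) (hT : 0 < T) (u u' v v' : ℝ → ℝ → ℂ)
    (hu : Measurable (Function.uncurry u)) (hu' : Measurable (Function.uncurry u'))
    (hv : Measurable (Function.uncurry v)) (hv' : Measurable (Function.uncurry v'))
    (p q : ℝ → ENNReal) (hp : Measurable p) (hq : Measurable q)
    (hup : ∀ x : ℝ, ∀ t ∈ Set.Icc (0:ℝ) T, (‖u x t‖₊ : ENNReal) ≤ p (x - t))
    (hvq : ∀ x : ℝ, ∀ t ∈ Set.Icc (0:ℝ) T, (‖v x t‖₊ : ENNReal) ≤ q (x + t)) :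
    Nplus T (fun x t => v x t * v' x t * u x t)
        ≤ Xminus T v * Xminus T v' * DnormE T p ∧
    Nminus T (fun x t => u x t * u' x t * v x t)
        ≤ Xplus T u * Xplus T u' * DnormE T q :=
  trilinear_estimates_general T u u' v v' hu hu' hv hv' p q hp hq hup hvq
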